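/- Let E be a finite set, ℓ ≥ 1, and let f : 2^E → ℝ be monotone nondecreasing, nonnegative, submodular, with f(∅) = 0 and curvature at most κ ∈ [0,1], i.e. f(A ∪ {e}) − f(A) ≥ (1−κ)·f({e}) for all A ⊆ E and e ∉ A. Set w(e) = (1−κ)·f({e}), l(A) = Σ_{e∈A} w(e), and g = f − l. Let S ⊆ E × [ℓ] have pairwise distinct first coordinates, let OPT ⊆ E with |OPT| = |S|, and for each j ∈ [ℓ] let h_j : S → OPT be a bijection with h_j((u,k)) = u whenever u ∈ OPT. If Φ_f(S) ≥ Φ_f(S − (u,k) + (h_j((u,k)), j)) for every (u,k) ∈ S and j ∈ [ℓ], where Φ_f(T) = Φ_g(T) + l(π_{[ℓ]}(T)) is built with γ = 1, then f(π_{[ℓ]}(S)) ≥ (1 − κ·(1 + 1/ℓ)^{−ℓ})·f(OPT). -/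

import Mathlib

/-
Sum the local-optimality inequalities over all exchanges `(p, j)` with `p ∈ S`, `j ∈ [ℓ]`.
The modular part `l` contributes exactly `ℓ (l(π(S)) - l(OPT))`. The part `g = f - l` is
submodular and, since the curvature is at most `κ`, monotone. On the layer `π_J(S)` the removals
cost at most `Σ_{k ∈ J} (g(π_J S) - g(π_{J \ k} S))` and the insertions of `OPT` into slot
`j ∈ J` gain at least `g(OPT) - g(π_J S)`. The weights satisfy `(ℓ - i) α_{i+1} = (1 + 1/ℓ) i α_i`,
so after weighting by `α_{|J|}` the removal costs telescope down to the top layer `J = [ℓ]`, which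
gives `g(π(S)) + l(π(S)) ≥ (1 - (1 + 1/ℓ)^{-ℓ}) g(OPT) + l(OPT)`. Finally `l(OPT) ≥ (1 - κ) f(OPT)`
by submodularity of `f`.
-/

open Finset

/-- `π_J(S)`: first coordinates of pairs in `S` whose second coordinate lies in `J`. -/
def proj {E : Type*} [DecidableEq E] (S : Finset (E × ℕ)) (J : Finset ℕ) : Finset E :=
  (S.filter (fun p => p.2 ∈ J)).image Prod.fst

/-- `α_i = (1+c)^(i-1) / C(ℓ-1, i-1)`. -/
noncomputable def alphaCoef (ℓ : ℕ) (c : ℝ) (i : ℕ) : ℝ :=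
  (1 + c) ^ (i - 1) / ((ℓ - 1).choose (i - 1) : ℝ)

/-- The potential `Φ_g(S) = (γ/ℓ)(1+γ³/ℓ)^{-ℓ} Σ_{∅≠J⊆[ℓ]} α_{|J|} g(π_J(S))`. -/
noncomputable def Phi {E : Type*} [DecidableEq E] (ℓ : ℕ) (γ : ℝ) (g : Finset E → ℝ)
    (S : Finset (E × ℕ)) : ℝ :=
  (γ / ℓ) * (1 + γ ^ 3 / ℓ) ^ (-(ℓ : ℤ)) *
    ∑ J ∈ (Finset.Icc 1 ℓ).powerset.filter (fun J => J.Nonempty),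
      alphaCoef ℓ (γ ^ 3 / ℓ) J.card * g (proj S J)

def IsSubmodular {E : Type*} [DecidableEq E] (g : Finset E → ℝ) : Prop :=
  ∀ A B : Finset E, g (A ∪ B) + g (A ∩ B) ≤ g A + g B

namespace IsSubmodular

variable {E : Type*} [DecidableEq E] {g : Finset E → ℝ}

lemma sub_sum (hg : IsSubmodular g) (w : E → ℝ) :
    IsSubmodular fun A => g A - ∑ e ∈ A, w e := by
  intro A B
  linarith [hg A B, sum_union_inter (s₁ := A) (s₂ := B) (f := w)]

lemma sub_le_sum_insert_sub (hg : IsSubmodular g) (X O : Finset E) :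
    g (X ∪ O) - g X ≤ ∑ o ∈ O, (g (insert o X) - g X) := by
  induction O using Finset.induction_on with
  | empty => simp
  | insert o O ho ih =>
    have hunion : insert o X ∪ (X ∪ O) = X ∪ insert o O := by
      ext; simp only [mem_union, mem_insert]; tauto
    have hinter : insert o X ∩ (X ∪ O) = X := by
      ext; simp only [mem_inter, mem_union, mem_insert]; grind
    have := hg (insert o X) (X ∪ O)
    rw [hunion, hinter] at this
    rw [sum_insert ho]
    linarith

lemma sum_sub_erase_le (hg : IsSubmodular g) {U B : Finset E} (hUB : U ⊆ B) :
    ∑ u ∈ U, (g B - g (B.erase u)) ≤ g B - g (B \ U) := by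
  induction U using Finset.induction_on with
  | empty => simp
  | insert a U ha ih =>
    have haB : a ∈ B := hUB (mem_insert_self a U)
    have hunion : B.erase a ∪ (B \ U) = B := by
      ext; simp only [mem_union, mem_erase, mem_sdiff]; grind
    have hinter : B.erase a ∩ (B \ U) = B \ insert a U := by
      ext; simp only [mem_inter, mem_erase, mem_sdiff, mem_insert]; tauto
    have := hg (B.erase a) (B \ U)
    rw [hunion, hinter] at this
    rw [sum_insert ha]
    linarith [ih ((subset_insert a U).trans hUB)]

lemma insert_add_le (hg : IsSubmodular g) (hmono : Monotone g) {B' B : Finset E}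
    (hB : B' ⊆ B) (v : E) : g (insert v B) + g B' ≤ g B + g (insert v B') := by
  have hunion : B ∪ insert v B' = insert v B := by
    rw [union_insert, union_eq_left.2 hB]
  have hinter : B' ⊆ B ∩ insert v B' := subset_inter hB (subset_insert v B')
  have := hg B (insert v B')
  rw [hunion] at this
  linarith [hmono hinter]

lemma le_sum_singleton (hg : IsSubmodular g) (hg0 : g ∅ = 0) (O : Finset E) :
    g O ≤ ∑ o ∈ O, g {o} := by
  simpa [hg0] using hg.sub_le_sum_insert_sub ∅ O

end IsSubmodular

lemma snd_eq_of_injOn_fst {E : Type*} {S : Finset (E × ℕ)}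
    (hS : Set.InjOn Prod.fst (S : Set (E × ℕ))) :
    ∀ ⦃u : E⦄ ⦃k k' : ℕ⦄, (u, k) ∈ S → (u, k') ∈ S → k = k' :=
  fun _ _ _ hk hk' => congrArg Prod.snd (hS hk hk' rfl)

section proj

variable {E : Type*} [DecidableEq E] {S T : Finset (E × ℕ)} {J K : Finset ℕ}

lemma mem_proj {u : E} : u ∈ proj S J ↔ ∃ k ∈ J, (u, k) ∈ S := by
  simp only [proj, mem_image, mem_filter, Prod.exists]
  grind

lemma proj_subset_proj (hTS : T ⊆ S) (hJK : J ⊆ K) : proj T J ⊆ proj S K := by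
  intro u
  simp only [mem_proj]
  exact fun ⟨k, hk, hu⟩ => ⟨k, hJK hk, hTS hu⟩

@[simp] lemma proj_empty_right : proj S ∅ = ∅ := by
  ext; simp [mem_proj]

lemma proj_insert (q : E × ℕ) :
    proj (insert q T) J = if q.2 ∈ J then insert q.1 (proj T J) else proj T J := by
  ext u
  split_ifs <;> simp only [mem_proj, mem_insert] <;> grind

lemma proj_erase (hS : Set.InjOn Prod.fst (S : Set (E × ℕ))) {p : E × ℕ} (hp : p ∈ S) :
    proj (S.erase p) J = if p.2 ∈ J then (proj S J).erase p.1 else proj S J := by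
  have hsnd := snd_eq_of_injOn_fst hS
  ext u
  split_ifs <;> simp only [mem_proj, mem_erase] <;> grind

lemma proj_sdiff (hS : Set.InjOn Prod.fst (S : Set (E × ℕ))) :
    proj S J \ proj S K = proj S (J \ K) := by
  have hsnd := snd_eq_of_injOn_fst hS
  ext u
  simp only [mem_sdiff, mem_proj]
  grind

lemma proj_eq_image_fst {L : Finset ℕ} (hS : ∀ p ∈ S, p.2 ∈ L) : proj S L = S.image Prod.fst := by
  rw [proj, filter_true_of_mem hS]

end proj

namespace IsSubmodular

variable {E : Type*} [DecidableEq E] {g : Finset E → ℝ}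

lemma sum_sub_proj_erase_le (hg : IsSubmodular g) {S : Finset (E × ℕ)}
    (hS : Set.InjOn Prod.fst (S : Set (E × ℕ))) (J : Finset ℕ) :
    ∑ p ∈ S, (g (proj S J) - g (proj (S.erase p) J)) ≤
      ∑ k ∈ J, (g (proj S J) - g (proj S (J.erase k))) := by
  have hterm : ∀ p ∈ S, g (proj S J) - g (proj (S.erase p) J) =
      if p.2 ∈ J then g (proj S J) - g ((proj S J).erase p.1) else 0 := by
    intro p hp
    rw [proj_erase hS hp]
    split_ifs <;> simp
  rw [sum_congr rfl hterm, ← sum_filter,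
    ← sum_fiberwise_of_maps_to (g := Prod.snd) (t := J) fun p hp => (mem_filter.1 hp).2]
  refine sum_le_sum fun k hk => ?_
  have hfiber : {p ∈ {p ∈ S | p.2 ∈ J} | p.2 = k} = {p ∈ S | p.2 ∈ ({k} : Finset ℕ)} := by
    ext p
    simp only [mem_filter, mem_singleton]
    grind
  calc _ = ∑ u ∈ proj S {k}, (g (proj S J) - g ((proj S J).erase u)) := by
        rw [hfiber]
        exact (sum_image (f := fun u => g (proj S J) - g ((proj S J).erase u))
          (hS.mono (filter_subset _ S))).symm
    _ ≤ g (proj S J) - g (proj S J \ proj S {k}) :=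
        hg.sum_sub_erase_le (proj_subset_proj subset_rfl (singleton_subset_iff.2 hk))
    _ = _ := by rw [proj_sdiff hS, ← erase_eq]

lemma sum_sub_insert_le (hg : IsSubmodular g) (hmono : Monotone g) {ι : Type*} {S : Finset ι}
    {O : Finset E} {h : ι → E} (hh : Set.BijOn h S O) (B : Finset E) :
    ∑ p ∈ S, (g B - g (insert (h p) B)) ≤ g B - g O := by
  have hreindex : ∑ p ∈ S, (g B - g (insert (h p) B)) = ∑ o ∈ O, (g B - g (insert o B)) :=
    sum_nbij h (fun _ hp => hh.mapsTo hp) hh.injOn hh.surjOn fun _ _ => rfl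
  rw [hreindex]
  have hsub := hg.sub_le_sum_insert_sub B O
  have hOB := hmono (subset_union_right : O ⊆ B ∪ O)
  simp only [sum_sub_distrib] at hsub ⊢
  linarith

lemma sub_proj_exchange_le (hg : IsSubmodular g) (hmono : Monotone g) (S : Finset (E × ℕ))
    (J : Finset ℕ) (p : E × ℕ) (v : E) (j : ℕ) :
    g (proj S J) - g (proj (insert (v, j) (S.erase p)) J) ≤
      (g (proj S J) - g (proj (S.erase p) J)) +
        if j ∈ J then g (proj S J) - g (insert v (proj S J)) else 0 := by
  rw [proj_insert]
  split_ifs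
  · linarith [hg.insert_add_le hmono (proj_subset_proj (J := J) (erase_subset p S) subset_rfl) v]
  · simp

lemma sum_sum_sub_proj_exchange_le (hg : IsSubmodular g) (hmono : Monotone g)
    {S : Finset (E × ℕ)} (hS : Set.InjOn Prod.fst (S : Set (E × ℕ))) {L J : Finset ℕ}
    (hJL : J ⊆ L) {O : Finset E} {h : ℕ → E × ℕ → E} (hh : ∀ j ∈ L, Set.BijOn (h j) S O) :
    ∑ j ∈ L, ∑ p ∈ S, (g (proj S J) - g (proj (insert (h j p, j) (S.erase p)) J)) ≤
      #L * ∑ k ∈ J, (g (proj S J) - g (proj S (J.erase k))) + #J * (g (proj S J) - g O) := by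
  have hstep : ∀ j ∈ L, ∑ p ∈ S, (g (proj S J) - g (proj (insert (h j p, j) (S.erase p)) J)) ≤
      ∑ p ∈ S, (g (proj S J) - g (proj (S.erase p) J)) +
        if j ∈ J then g (proj S J) - g O else 0 := by
    intro j hj
    grw [sum_le_sum fun p _ => hg.sub_proj_exchange_le hmono S J p (h j p) j, sum_add_distrib]
    gcongr
    split_ifs
    · exact hg.sum_sub_insert_le hmono (hh j hj) _
    · simp
  grw [sum_le_sum hstep, sum_add_distrib, sum_const, sum_ite_mem, inter_eq_right.2 hJL, sum_const,
    nsmul_eq_mul, nsmul_eq_mul, hg.sum_sub_proj_erase_le hS J]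

end IsSubmodular

lemma sum_powerset_sum_eq_sum_powerset_sum_sdiff {ι β : Type*} [DecidableEq ι] [AddCommMonoid β]
    (L : Finset ι) (F : Finset ι → ι → β) :
    ∑ J ∈ L.powerset, ∑ k ∈ J, F J k = ∑ J ∈ L.powerset, ∑ k ∈ L \ J, F (insert k J) k := by
  rw [sum_sigma', sum_sigma']
  refine sum_nbij' (fun x => ⟨x.1.erase x.2, x.2⟩) (fun x => ⟨insert x.2 x.1, x.2⟩)
    ?_ ?_ ?_ ?_ ?_
  all_goals
    rintro ⟨J, k⟩ hx
    simp only [mem_sigma, mem_powerset, mem_sdiff] at hx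
  · simp only [mem_sigma, mem_powerset, mem_sdiff]
    exact ⟨(erase_subset k J).trans hx.1, hx.1 hx.2, notMem_erase k J⟩
  · simp only [mem_sigma, mem_powerset]
    exact ⟨insert_subset hx.2.1 hx.1, mem_insert_self k J⟩
  · simp [insert_erase hx.2]
  · simp [erase_insert hx.2.2]
  · simp [insert_erase hx.2]

section alphaCoef

variable {ℓ : ℕ} {c : ℝ}

lemma alphaCoef_nonneg (hc : 0 ≤ 1 + c) (i : ℕ) : 0 ≤ alphaCoef ℓ c i := by
  unfold alphaCoef
  positivity

lemma alphaCoef_self : alphaCoef ℓ c ℓ = (1 + c) ^ (ℓ - 1) := by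
  simp [alphaCoef]

lemma sub_mul_alphaCoef_succ {i : ℕ} (hi : 1 ≤ i) (hiℓ : i < ℓ) :
    ((ℓ - i : ℕ) : ℝ) * alphaCoef ℓ c (i + 1) = (1 + c) * i * alphaCoef ℓ c i := by
  obtain ⟨k, rfl⟩ : ∃ k, i = k + 1 := ⟨i - 1, by omega⟩
  obtain ⟨n, rfl⟩ : ∃ n, ℓ = n + 1 := ⟨ℓ - 1, by omega⟩
  have hchoose : (n.choose (k + 1) : ℝ) * (k + 1) = n.choose k * ((n - k : ℕ) : ℝ) := by
    exact_mod_cast Nat.choose_succ_right_eq n k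
  have hpos : (n.choose (k + 1) : ℝ) ≠ 0 := by positivity [Nat.choose_pos (show k + 1 ≤ n by omega)]
  have hpos' : (n.choose k : ℝ) ≠ 0 := by positivity [Nat.choose_pos (show k ≤ n by omega)]
  rw [show n + 1 - (k + 1) = n - k by omega]
  simp only [alphaCoef, Nat.add_sub_cancel, pow_succ]
  field_simp
  push_cast
  linear_combination (-(1 + c) ^ k * (1 + c)) * hchoose

lemma choose_mul_alphaCoef {i : ℕ} (hi : 1 ≤ i) (hiℓ : i ≤ ℓ) :
    (ℓ.choose i : ℝ) * i * alphaCoef ℓ c i = ℓ * (1 + c) ^ (i - 1) := by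
  obtain ⟨k, rfl⟩ : ∃ k, i = k + 1 := ⟨i - 1, by omega⟩
  obtain ⟨n, rfl⟩ : ∃ n, ℓ = n + 1 := ⟨ℓ - 1, by omega⟩
  have hchoose : ((n + 1 : ℕ) : ℝ) * n.choose k = (n + 1).choose (k + 1) * ((k + 1 : ℕ) : ℝ) := by
    exact_mod_cast Nat.add_one_mul_choose_eq n k
  have hpos : (n.choose k : ℝ) ≠ 0 := by positivity [Nat.choose_pos (show k ≤ n by omega)]
  simp only [alphaCoef, Nat.add_sub_cancel]
  push_cast at hchoose ⊢
  field_simp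
  linear_combination (-(1 + c) ^ k) * hchoose

variable {ι : Type*} {L : Finset ι}

lemma mul_sum_powerset_card_mul_alphaCoef (hL : #L = ℓ) :
    c * ∑ J ∈ L.powerset, (#J : ℝ) * alphaCoef ℓ c #J = ℓ * ((1 + c) ^ ℓ - 1) := by
  rw [sum_powerset_apply_card (fun i => (i : ℝ) * alphaCoef ℓ c i), hL, sum_range_succ']
  have hterm : ∀ i ∈ range ℓ, ℓ.choose (i + 1) • (((i + 1 : ℕ) : ℝ) * alphaCoef ℓ c (i + 1)) =
      ℓ * (1 + c) ^ i := by
    intro i hi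
    rw [nsmul_eq_mul, ← mul_assoc, choose_mul_alphaCoef (by omega) (mem_range.1 hi)]
    rfl
  rw [sum_congr rfl hterm, ← mul_sum, ← geom_sum_mul (1 + c) ℓ]
  simp only [Nat.cast_zero, zero_mul, smul_zero, add_zero]
  ring

lemma sum_powerset_alphaCoef_mul [DecidableEq ι] (hL : #L = ℓ) (G : Finset ι → ℝ) (hG : G ∅ = 0) :
    ∑ J ∈ L.powerset, alphaCoef ℓ c #J * (∑ k ∈ J, (G J - G (J.erase k)) + c * #J * G J) =
      (1 + c) * ℓ * alphaCoef ℓ c ℓ * G L := by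
  have hexpand : ∀ J : Finset ι, alphaCoef ℓ c #J * (∑ k ∈ J, (G J - G (J.erase k)) + c * #J * G J)
      = (1 + c) * #J * alphaCoef ℓ c #J * G J - ∑ k ∈ J, alphaCoef ℓ c #J * G (J.erase k) := by
    intro J
    rw [sum_sub_distrib, sum_const, nsmul_eq_mul, ← mul_sum]
    ring
  have hreindex : ∑ J ∈ L.powerset, ∑ k ∈ J, alphaCoef ℓ c #J * G (J.erase k) =
      ∑ J ∈ L.powerset, ((ℓ - #J : ℕ) : ℝ) * alphaCoef ℓ c (#J + 1) * G J := by
    rw [sum_powerset_sum_eq_sum_powerset_sum_sdiff]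
    refine sum_congr rfl fun J hJ => ?_
    have hins : ∀ k ∈ L \ J, alphaCoef ℓ c #(insert k J) * G ((insert k J).erase k) =
        alphaCoef ℓ c (#J + 1) * G J := by
      intro k hk
      rw [erase_insert (mem_sdiff.1 hk).2, card_insert_of_notMem (mem_sdiff.1 hk).2]
    rw [sum_congr rfl hins, sum_const, card_sdiff_of_subset (mem_powerset.1 hJ), hL, nsmul_eq_mul,
      mul_assoc]
  -- every `J ≠ L` now has weight `(1 + c) #J α_{#J} - (ℓ - #J) α_{#J + 1}`, which vanishes
  rw [sum_congr rfl fun J _ => hexpand J, sum_sub_distrib, hreindex, ← sum_sub_distrib,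
    sum_eq_single_of_mem L (mem_powerset_self L)]
  · simp [hL]
  · intro J hJ hJL
    obtain rfl | hne := J.eq_empty_or_nonempty
    · simp [hG]
    have hlt : #J < ℓ := hL ▸ card_lt_card (ssubset_of_subset_of_ne (mem_powerset.1 hJ) hJL)
    rw [sub_mul_alphaCoef_succ hne.card_pos hlt]
    ring

end alphaCoef

section potential

variable {E : Type*} [DecidableEq E] {g : Finset E → ℝ} {ℓ : ℕ}

lemma Phi_eq_sum_powerset (γ : ℝ) (hg0 : g ∅ = 0) (T : Finset (E × ℕ)) :
    Phi ℓ γ g T = (γ / ℓ) * (1 + γ ^ 3 / ℓ) ^ (-(ℓ : ℤ)) *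
      ∑ J ∈ (Icc 1 ℓ).powerset, alphaCoef ℓ (γ ^ 3 / ℓ) #J * g (proj T J) := by
  rw [Phi, sum_filter_of_ne]
  intro J _ hJ
  rw [nonempty_iff_ne_empty]
  rintro rfl
  simp [hg0] at hJ

lemma IsSubmodular.sum_sum_Phi_sub_le (hg : IsSubmodular g) (hmono : Monotone g) (hg0 : g ∅ = 0)
    (hℓ : 1 ≤ ℓ) {S : Finset (E × ℕ)} (hS : Set.InjOn Prod.fst (S : Set (E × ℕ)))
    {OPT : Finset E} {h : ℕ → E × ℕ → E} (hbij : ∀ j ∈ Icc 1 ℓ, Set.BijOn (h j) S OPT) :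
    ∑ j ∈ Icc 1 ℓ, ∑ p ∈ S, (Phi ℓ 1 g S - Phi ℓ 1 g (insert (h j p, j) (S.erase p))) ≤
      ℓ * (g (proj S (Icc 1 ℓ)) - (1 - (1 + 1 / (ℓ : ℝ)) ^ (-(ℓ : ℤ))) * g OPT) := by
  set L := Icc 1 ℓ
  set c : ℝ := 1 / ℓ
  set β := (1 + c) ^ (-(ℓ : ℤ))
  set α : Finset ℕ → ℝ := fun J => alphaCoef ℓ c #J
  set G : Finset ℕ → ℝ := fun J => g (proj S J)
  set D : Finset ℕ → ℝ := fun J => ∑ k ∈ J, (G J - G (J.erase k))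
  have hL : #L = ℓ := by simp [L]
  have hcℓ : c * ℓ = 1 := one_div_mul_cancel (by positivity)
  have hβ : β * (1 + c) ^ ℓ = 1 := by
    simp only [β, zpow_neg, zpow_natCast]
    exact inv_mul_cancel₀ (by positivity)
  have hPhi : ∀ T, Phi ℓ 1 g T = c * β * ∑ J ∈ L.powerset, α J * g (proj T J) := by
    intro T
    simp only [Phi_eq_sum_powerset 1 hg0 T, one_pow, α, β, c, L]
  have hdiff : ∀ T, Phi ℓ 1 g S - Phi ℓ 1 g T =
      c * β * ∑ J ∈ L.powerset, α J * (G J - g (proj T J)) := by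
    intro T
    simp only [hPhi, ← mul_sub, ← sum_sub_distrib, G]
  calc _ = c * β * ∑ J ∈ L.powerset, α J *
        ∑ j ∈ L, ∑ p ∈ S, (G J - g (proj (insert (h j p, j) (S.erase p)) J)) := by
        simp only [hdiff, ← mul_sum]
        congr 1
        simp only [mul_sum]
        exact (sum_congr rfl fun j _ => sum_comm).trans sum_comm
    _ ≤ c * β * ∑ J ∈ L.powerset, α J * (ℓ * D J + #J * (G J - g OPT)) := by
        gcongr with J hJ
        · exact alphaCoef_nonneg (by positivity) _
        · rw [← hL]
          exact hg.sum_sum_sub_proj_exchange_le hmono hS (mem_powerset.1 hJ) hbij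
    _ = β * ∑ J ∈ L.powerset, α J * (D J + c * #J * G J) -
          β * g OPT * (c * ∑ J ∈ L.powerset, (#J : ℝ) * α J) := by
        simp only [mul_sum, ← sum_sub_distrib]
        refine sum_congr rfl fun J _ => ?_
        linear_combination β * α J * D J * hcℓ
    _ = _ := by
        rw [sum_powerset_alphaCoef_mul hL G (by simp [G, hg0]),
          mul_sum_powerset_card_mul_alphaCoef hL, alphaCoef_self]
        have hpow : (1 + c) * (1 + c) ^ (ℓ - 1) = (1 + c) ^ ℓ := by
          rw [← pow_succ', Nat.sub_add_cancel hℓ]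
        linear_combination (ℓ * G L - ℓ * g OPT) * hβ + β * ℓ * G L * hpow

end potential

section modular

variable {E : Type*} [DecidableEq E] {S : Finset (E × ℕ)} {L : Finset ℕ}

lemma sum_proj_insert_erase (hSL : ∀ q ∈ S, q.2 ∈ L) (hS : Set.InjOn Prod.fst (S : Set (E × ℕ)))
    {p : E × ℕ} (hp : p ∈ S) {v : E} (hv : v ∈ proj S L → v = p.1) {j : ℕ} (hj : j ∈ L)
    (w : E → ℝ) :
    ∑ e ∈ proj (insert (v, j) (S.erase p)) L, w e = ∑ e ∈ proj S L, w e - w p.1 + w v := by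
  have hpL : p.1 ∈ proj S L := mem_proj.2 ⟨p.2, hSL p hp, hp⟩
  have hvL : v ∉ (proj S L).erase p.1 := fun hmem =>
    notMem_erase p.1 (proj S L) (hv (mem_of_mem_erase hmem) ▸ hmem)
  rw [proj_insert, if_pos hj, proj_erase hS hp, if_pos (hSL p hp), sum_insert hvL,
    sum_erase_eq_sub hpL]
  ring

lemma sum_sum_sub_sum_proj_exchange (hSL : ∀ q ∈ S, q.2 ∈ L)
    (hS : Set.InjOn Prod.fst (S : Set (E × ℕ))) {OPT : Finset E} {h : ℕ → E × ℕ → E}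
    (hbij : ∀ j ∈ L, Set.BijOn (h j) S OPT) (hfix : ∀ j ∈ L, ∀ p ∈ S, p.1 ∈ OPT → h j p = p.1)
    (w : E → ℝ) :
    ∑ j ∈ L, ∑ p ∈ S, (∑ e ∈ proj S L, w e - ∑ e ∈ proj (insert (h j p, j) (S.erase p)) L, w e) =
      #L * (∑ e ∈ proj S L, w e - ∑ o ∈ OPT, w o) := by
  have hv : ∀ j ∈ L, ∀ p ∈ S, h j p ∈ proj S L → h j p = p.1 := by
    intro j hj p hp hmem
    obtain ⟨k, -, hk⟩ := mem_proj.1 hmem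
    exact congrArg Prod.fst
      ((hbij j hj).injOn hk hp (hfix j hj _ hk ((hbij j hj).mapsTo hp)))
  have hfst : ∑ p ∈ S, w p.1 = ∑ e ∈ proj S L, w e := by
    rw [proj_eq_image_fst hSL, sum_image hS]
  have hopt : ∀ j ∈ L, ∑ p ∈ S, w (h j p) = ∑ o ∈ OPT, w o := fun j hj =>
    sum_nbij (h j) (fun _ hp => (hbij j hj).mapsTo hp) (hbij j hj).injOn (hbij j hj).surjOn
      fun _ _ => rfl
  have hrow : ∀ j ∈ L, ∑ p ∈ S, (∑ e ∈ proj S L, w e -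
      ∑ e ∈ proj (insert (h j p, j) (S.erase p)) L, w e) =
        ∑ e ∈ proj S L, w e - ∑ o ∈ OPT, w o := by
    intro j hj
    rw [sum_congr rfl fun p hp => by rw [sum_proj_insert_erase hSL hS hp (hv j hj p hp) hj w],
      ← hopt j hj, ← hfst, ← sum_sub_distrib]
    exact sum_congr rfl fun _ _ => by ring
  rw [sum_congr rfl hrow, sum_const, nsmul_eq_mul]

end modular

lemma monotone_sub_sum_of_le_insert_sub {E : Type*} [DecidableEq E] {f : Finset E → ℝ}
    {w : E → ℝ} (hw : ∀ A : Finset E, ∀ e ∉ A, w e ≤ f (insert e A) - f A) :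
    Monotone fun A => f A - ∑ e ∈ A, w e := by
  refine monotone_iff_forall_le_insert.2 fun A e he => ?_
  simp only [sum_insert he]
  linarith [hw A e he]

theorem IsSubmodular.le_add_sum_of_forall_exchange_le {E : Type*} [DecidableEq E] {g : Finset E → ℝ}
    (hg : IsSubmodular g) (hmono : Monotone g) (hg0 : g ∅ = 0) {ℓ : ℕ} (hℓ : 1 ≤ ℓ)
    {S : Finset (E × ℕ)} (hSL : ∀ p ∈ S, p.2 ∈ Icc 1 ℓ) (hS : Set.InjOn Prod.fst (S : Set (E × ℕ)))
    {OPT : Finset E} {h : ℕ → E × ℕ → E} (hbij : ∀ j ∈ Icc 1 ℓ, Set.BijOn (h j) S OPT)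
    (hfix : ∀ j ∈ Icc 1 ℓ, ∀ p ∈ S, p.1 ∈ OPT → h j p = p.1) (w : E → ℝ)
    (hlocal : ∀ p ∈ S, ∀ j ∈ Icc 1 ℓ,
      Phi ℓ 1 g (insert (h j p, j) (S.erase p)) +
          ∑ e ∈ proj (insert (h j p, j) (S.erase p)) (Icc 1 ℓ), w e ≤
        Phi ℓ 1 g S + ∑ e ∈ proj S (Icc 1 ℓ), w e) :
    (1 - (1 + 1 / (ℓ : ℝ)) ^ (-(ℓ : ℤ))) * g OPT + ∑ o ∈ OPT, w o ≤
      g (proj S (Icc 1 ℓ)) + ∑ e ∈ proj S (Icc 1 ℓ), w e := by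
  have htotal : 0 ≤ ∑ j ∈ Icc 1 ℓ, ∑ p ∈ S,
      ((Phi ℓ 1 g S + ∑ e ∈ proj S (Icc 1 ℓ), w e) -
        (Phi ℓ 1 g (insert (h j p, j) (S.erase p)) +
          ∑ e ∈ proj (insert (h j p, j) (S.erase p)) (Icc 1 ℓ), w e)) :=
    sum_nonneg fun j hj => sum_nonneg fun p hp => sub_nonneg.2 (hlocal p hp j hj)
  simp only [add_sub_add_comm, sum_add_distrib,
    sum_sum_sub_sum_proj_exchange hSL hS hbij hfix w, Nat.card_Icc, add_tsub_cancel_right] at htotal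
  have hPhi := hg.sum_sum_Phi_sub_le hmono hg0 hℓ hS hbij
  have hℓpos : (0 : ℝ) < ℓ := by exact_mod_cast hℓ
  nlinarith

theorem stmt_3_general {E : Type*} [DecidableEq E] (ℓ : ℕ) (hℓ : 1 ≤ ℓ)
    (f : Finset E → ℝ)
    (hempty : f ∅ = 0)
    (hsub : ∀ A B : Finset E, f A + f B ≥ f (A ∪ B) + f (A ∩ B))
    (κ : ℝ) (hκ1 : κ ≤ 1)
    (hcurv : ∀ A : Finset E, ∀ e ∉ A, f (insert e A) - f A ≥ (1 - κ) * f {e})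
    (w : E → ℝ) (hw : ∀ e, w e = (1 - κ) * f {e})
    (l : Finset E → ℝ) (hl : ∀ A : Finset E, l A = ∑ e ∈ A, w e)
    (g : Finset E → ℝ) (hg : ∀ A : Finset E, g A = f A - l A)
    (S : Finset (E × ℕ)) (hS : ∀ p ∈ S, p.2 ∈ Finset.Icc 1 ℓ)
    (hdist : ∀ p ∈ S, ∀ q ∈ S, p.1 = q.1 → p = q)
    (OPT : Finset E)
    (h : ℕ → E × ℕ → E)
    (hbij : ∀ j ∈ Finset.Icc 1 ℓ, Set.BijOn (h j) ↑S ↑OPT)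
    (hfix : ∀ j ∈ Finset.Icc 1 ℓ, ∀ p ∈ S, p.1 ∈ OPT → h j p = p.1)
    (Φf : Finset (E × ℕ) → ℝ)
    (hΦf : ∀ T : Finset (E × ℕ), Φf T = Phi ℓ 1 g T + l (proj T (Finset.Icc 1 ℓ)))
    (hlocal : ∀ p ∈ S, ∀ j ∈ Finset.Icc 1 ℓ,
      Φf S ≥ Φf (insert (h j p, j) (S.erase p))) :
    f (proj S (Finset.Icc 1 ℓ)) ≥ (1 - κ * (1 + 1 / (ℓ : ℝ)) ^ (-(ℓ : ℤ))) * f OPT := by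
  obtain rfl : l = fun A => ∑ e ∈ A, w e := funext hl
  obtain rfl : g = fun A => f A - ∑ e ∈ A, w e := funext hg
  have hfsub : IsSubmodular f := hsub
  have hgmono : Monotone fun A => f A - ∑ e ∈ A, w e :=
    monotone_sub_sum_of_le_insert_sub fun A e he => (hw e).trans_le (hcurv A e he)
  have hbound := (hfsub.sub_sum w).le_add_sum_of_forall_exchange_le hgmono (by simp [hempty]) hℓ hS
    hdist hbij hfix w fun p hp j hj => by
      simpa only [hΦf] using hlocal p hp j hj
  have hOPT : (1 - κ) * f OPT ≤ ∑ o ∈ OPT, w o := by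
    simp only [hw, ← mul_sum]
    exact mul_le_mul_of_nonneg_left (hfsub.le_sum_singleton hempty OPT) (by linarith)
  set β := (1 + 1 / (ℓ : ℝ)) ^ (-(ℓ : ℤ))
  have hβ : 0 ≤ β := by positivity
  linarith [mul_le_mul_of_nonneg_left hOPT hβ]

theorem stmt_3 {E : Type*} [Fintype E] [DecidableEq E] (ℓ : ℕ) (hℓ : 1 ≤ ℓ)
    (f : Finset E → ℝ)
    (hmono : ∀ A B : Finset E, A ⊆ B → f A ≤ f B)
    (hnonneg : ∀ A : Finset E, 0 ≤ f A) (hempty : f ∅ = 0)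
    (hsub : ∀ A B : Finset E, f A + f B ≥ f (A ∪ B) + f (A ∩ B))
    (κ : ℝ) (hκ0 : 0 ≤ κ) (hκ1 : κ ≤ 1)
    (hcurv : ∀ A : Finset E, ∀ e ∉ A, f (insert e A) - f A ≥ (1 - κ) * f {e})
    (w : E → ℝ) (hw : ∀ e, w e = (1 - κ) * f {e})
    (l : Finset E → ℝ) (hl : ∀ A : Finset E, l A = ∑ e ∈ A, w e)
    (g : Finset E → ℝ) (hg : ∀ A : Finset E, g A = f A - l A)
    (S : Finset (E × ℕ)) (hS : ∀ p ∈ S, p.2 ∈ Finset.Icc 1 ℓ)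
    (hdist : ∀ p ∈ S, ∀ q ∈ S, p.1 = q.1 → p = q)
    (OPT : Finset E) (hcard : OPT.card = S.card)
    (h : ℕ → E × ℕ → E)
    (hbij : ∀ j ∈ Finset.Icc 1 ℓ, Set.BijOn (h j) ↑S ↑OPT)
    (hfix : ∀ j ∈ Finset.Icc 1 ℓ, ∀ p ∈ S, p.1 ∈ OPT → h j p = p.1)
    (Φf : Finset (E × ℕ) → ℝ)
    (hΦf : ∀ T : Finset (E × ℕ), Φf T = Phi ℓ 1 g T + l (proj T (Finset.Icc 1 ℓ)))
    (hlocal : ∀ p ∈ S, ∀ j ∈ Finset.Icc 1 ℓ,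
      Φf S ≥ Φf (insert (h j p, j) (S.erase p))) :
    f (proj S (Finset.Icc 1 ℓ)) ≥ (1 - κ * (1 + 1 / (ℓ : ℝ)) ^ (-(ℓ : ℤ))) * f OPT :=
  stmt_3_general ℓ hℓ f hempty hsub κ hκ1 hcurv w hw l hl g hg S hS hdist OPT h hbij hfix Φf hΦf
    hlocal
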